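/- Let C_{Γ(LP2,2,1)} be the class of all finite Kripke models whose frame consists of a root x and finitely many (at least one) pairwise disjoint two-element sets C⁰,…,C^j not containing x, where the accessibility relation R is the reflexive relation with C^k×C^k ⊆ R for each k, x R y for every world y, and no other pairs (a root below finitely many clusters, each consisting of exactly two final worlds). Then C_{Γ(LP2,2,1)} enjoys 3-IP. -/

import Mathlib

/-- Modal formulas over countably many variables. -/
inductive ModalForm : Type where
  | var : ℕ → ModalForm
  | bot : ModalForm
  | and : ModalForm → ModalForm → ModalForm
  | or : ModalForm → ModalForm → ModalForm
  | not : ModalForm → ModalForm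
  | imp : ModalForm → ModalForm → ModalForm
  | box : ModalForm → ModalForm

namespace ModalForm

mutual
  /-- positively occurring variables -/
  def vpos : ModalForm → Finset ℕ
    | var p => {p}
    | bot => ∅
    | and φ ψ => vpos φ ∪ vpos ψ
    | or φ ψ => vpos φ ∪ vpos ψ
    | not φ => vneg φ
    | imp φ ψ => vneg φ ∪ vpos ψ
    | box φ => vpos φ
  /-- negatively occurring variables -/
  def vneg : ModalForm → Finset ℕ
    | var _ => ∅
    | bot => ∅
    | and φ ψ => vneg φ ∪ vneg ψ
    | or φ ψ => vneg φ ∪ vneg ψ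
    | not φ => vpos φ
    | imp φ ψ => vpos φ ∪ vneg ψ
    | box φ => vneg φ
end

/-- Modal depth: maximal nesting of `□`. -/
def depth : ModalForm → ℕ
  | var _ => 0
  | bot => 0
  | and φ ψ => max (depth φ) (depth ψ)
  | or φ ψ => max (depth φ) (depth ψ)
  | not φ => depth φ
  | imp φ ψ => max (depth φ) (depth ψ)
  | box φ => depth φ + 1

/-- `◇φ := ¬□¬φ` -/
def dia (φ : ModalForm) : ModalForm := not (box (not φ))

/-- `⊤ := ¬⊥` -/
def top : ModalForm := not bot

end ModalForm

/-- An S4 Kripke frame: nonempty set of worlds with a reflexive transitive relation. -/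
structure KFrame : Type 1 where
  W : Type
  R : W → W → Prop
  nonempty : Nonempty W
  refl : ∀ x, R x x
  trans : ∀ x y z, R x y → R y z → R x z

/-- A Kripke model: a frame with a valuation. -/
structure KModel : Type 1 extends KFrame where
  val : W → ℕ → Prop

/-- The model based on frame `F` with valuation `V`. -/
def KFrame.toModel (F : KFrame) (V : F.W → ℕ → Prop) : KModel :=
  { toKFrame := F, val := V }

/-- Satisfaction in a Kripke model. -/
def KModel.Sat (M : KModel) : M.W → ModalForm → Prop
  | w, .var p => M.val w p
  | _, .bot => False
  | w, .and φ ψ => M.Sat w φ ∧ M.Sat w ψ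
  | w, .or φ ψ => M.Sat w φ ∨ M.Sat w ψ
  | w, .not φ => ¬ M.Sat w φ
  | w, .imp φ ψ => M.Sat w φ → M.Sat w ψ
  | w, .box φ => ∀ y, M.R w y → M.Sat y φ

/-- `(M0,w0) →ₙ^{(P⁺,P⁻)} (M1,w1)`: every `(P⁺,P⁻)`-formula of depth ≤ n
satisfied at `(M0,w0)` is satisfied at `(M1,w1)`. -/
def ModalArrow (Pp Pm : Finset ℕ) (n : ℕ) (M0 : KModel) (w0 : M0.W)
    (M1 : KModel) (w1 : M1.W) : Prop :=
  ∀ φ : ModalForm, φ.vpos ⊆ Pp → φ.vneg ⊆ Pm → φ.depth ≤ n →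
    M0.Sat w0 φ → M1.Sat w1 φ

/-- p-morphism between frames. -/
def PMorphism (F G : KFrame) (f : F.W → G.W) : Prop :=
  (∀ x y, F.R x y → G.R (f x) (f y)) ∧
  (∀ x w, G.R (f x) w → ∃ z, F.R x z ∧ f z = w)

/-- The class `C` of Kripke models enjoys `n`-IP. -/
def EnjoysIP (C : Set KModel) (n : ℕ) : Prop :=
  ∀ (Pp Pm : Finset ℕ) (M0 M1 : KModel), M0 ∈ C → M1 ∈ C →
    ∀ (w0 : M0.W) (w1 : M1.W), ModalArrow Pp Pm n M0 w0 M1 w1 →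
      ∃ (F : KFrame) (wstar : F.W) (f0 : F.W → M0.W) (f1 : F.W → M1.W),
        (∀ V : F.W → ℕ → Prop, F.toModel V ∈ C) ∧
        PMorphism F M0.toKFrame f0 ∧
        PMorphism F M1.toKFrame f1 ∧
        f0 wstar = w0 ∧ f1 wstar = w1 ∧
        ∀ x : F.W, ModalArrow Pp Pm 0 M0 (f0 x) M1 (f1 x)

/-- A world is final iff every successor is also a predecessor. -/
def KModel.Final (M : KModel) (w : M.W) : Prop := ∀ y, M.R w y → M.R y w

/-- The cluster of a world. -/
def KModel.cluster (M : KModel) (w : M.W) : Set M.W := {u | M.R w u ∧ M.R u w}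

/-- Cluster `C0` of `M0` matches cluster `C1` of `M1`. -/
def Matches (Pp Pm : Finset ℕ) (M0 M1 : KModel) (C0 : Set M0.W) (C1 : Set M1.W) : Prop :=
  (∀ u0 ∈ C0, ∃ u1 ∈ C1, ModalArrow Pp Pm 0 M0 u0 M1 u1) ∧
  (∀ u1 ∈ C1, ∃ u0 ∈ C0, ModalArrow Pp Pm 0 M0 u0 M1 u1)

/-- `φ` is satisfied at every world of every model in `C`. -/
def ValidOn (C : Set KModel) (φ : ModalForm) : Prop :=
  ∀ M ∈ C, ∀ w : M.W, M.Sat w φ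

/-- A set with exactly two elements. -/
def TwoElem {α : Type} (C : Set α) : Prop := ∃ a b : α, a ≠ b ∧ C = {a, b}

/-- The class of Γ(LP₂,2,1) models: a root below finitely many (at least one)
clusters, each consisting of exactly two final worlds. -/
def C_LP221 : Set KModel :=
  {M | Finite M.W ∧ ∃ (x : M.W) (j : ℕ) (C : Fin (j + 1) → Set M.W),
    (∀ k, x ∉ C k) ∧ (∀ k, TwoElem (C k)) ∧
    (∀ k l, k ≠ l → Disjoint (C k) (C l)) ∧
    (∀ w : M.W, w = x ∨ ∃ k, w ∈ C k) ∧
    ∀ u v : M.W, M.R u v ↔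
      (u = v ∨ (∃ k, u ∈ C k ∧ v ∈ C k) ∨ u = x)}


/-!
Up to depth-0 `(P⁺,P⁻)`-formulas, a world `u` is characterised by the conjunction `δ_u` of its
`(P⁺,P⁻)`-literals. If `w0` sees the cluster `{a, a'}`, then `w0` satisfies the depth-3 formula
`◇□((δ_a ∨ δ_a') ∧ ◇δ_a ∧ ◇δ_a')`; at `w1` it is witnessed by a world whose cluster consists of
worlds of type `a` or `a'` and realises both types, i.e. by a cluster above `w1` matching
`{a, a'}`. Running `→₃` backwards with the polarities swapped, every cluster above `w1` is
matched by one above `w0` as well. Two matching two-element clusters admit a perfect matching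
(Hall's condition for a `2 × 2` relation), so hanging one matched pair of clusters below a common
root for each matching pair of visible clusters gives a frame of the class with p-morphisms onto
both models.
-/

namespace ModalForm

def InFragment (Pp Pm : Finset ℕ) (n : ℕ) (φ : ModalForm) : Prop :=
  φ.vpos ⊆ Pp ∧ φ.vneg ⊆ Pm ∧ φ.depth ≤ n

section InFragment

variable {Pp Pm : Finset ℕ} {n : ℕ} {φ ψ : ModalForm}

@[simp]
theorem inFragment_var {p : ℕ} : (var p).InFragment Pp Pm n ↔ p ∈ Pp := by
  simp [InFragment, vpos, vneg, depth]

@[simp]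
theorem inFragment_bot : bot.InFragment Pp Pm n := by
  simp [InFragment, vpos, vneg, depth]

@[simp]
theorem inFragment_not : φ.not.InFragment Pp Pm n ↔ φ.InFragment Pm Pp n := by
  simp only [InFragment, vpos, vneg, depth]
  tauto

@[simp]
theorem inFragment_and :
    (φ.and ψ).InFragment Pp Pm n ↔ φ.InFragment Pp Pm n ∧ ψ.InFragment Pp Pm n := by
  simp only [InFragment, vpos, vneg, depth, Finset.union_subset_iff, max_le_iff]
  tauto

@[simp]
theorem inFragment_or :
    (φ.or ψ).InFragment Pp Pm n ↔ φ.InFragment Pp Pm n ∧ ψ.InFragment Pp Pm n := by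
  simp only [InFragment, vpos, vneg, depth, Finset.union_subset_iff, max_le_iff]
  tauto

@[simp]
theorem inFragment_imp :
    (φ.imp ψ).InFragment Pp Pm n ↔ φ.InFragment Pm Pp n ∧ ψ.InFragment Pp Pm n := by
  simp only [InFragment, vpos, vneg, depth, Finset.union_subset_iff, max_le_iff]
  tauto

@[simp]
theorem inFragment_box : φ.box.InFragment Pp Pm (n + 1) ↔ φ.InFragment Pp Pm n := by
  simp [InFragment, vpos, vneg, depth]

@[simp]
theorem not_inFragment_box_zero : ¬ φ.box.InFragment Pp Pm 0 := by
  simp [InFragment, depth]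

@[simp]
theorem inFragment_dia : φ.dia.InFragment Pp Pm (n + 1) ↔ φ.InFragment Pp Pm n := by
  simp [dia]

theorem InFragment.mono {m : ℕ} (h : φ.InFragment Pp Pm m) (hmn : m ≤ n) :
    φ.InFragment Pp Pm n :=
  ⟨h.1, h.2.1, h.2.2.trans hmn⟩

end InFragment

def conj (l : List ModalForm) : ModalForm := l.foldr and top

theorem inFragment_conj {Pp Pm : Finset ℕ} {n : ℕ} {l : List ModalForm}
    (h : ∀ φ ∈ l, φ.InFragment Pp Pm n) : (conj l).InFragment Pp Pm n := by
  induction l with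
  | nil => simp [conj, top]
  | cons φ l ih => simp_all [conj]

end ModalForm

open ModalForm

namespace KModel

variable (M : KModel) (w : M.W)

theorem sat_dia (φ : ModalForm) : M.Sat w φ.dia ↔ ∃ y, M.R w y ∧ M.Sat y φ := by
  simp [dia, Sat]

theorem sat_conj (l : List ModalForm) : M.Sat w (conj l) ↔ ∀ φ ∈ l, M.Sat w φ := by
  induction l with
  | nil => simp [conj, top, Sat]
  | cons φ l ih => simp [conj, Sat, ← ih]

end KModel

namespace ModalArrow

variable {Pp Pm : Finset ℕ} {n : ℕ} {M0 M1 : KModel} {w0 : M0.W} {w1 : M1.W}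

theorem sat (h : ModalArrow Pp Pm n M0 w0 M1 w1) {φ : ModalForm} (hφ : φ.InFragment Pp Pm n)
    (hs : M0.Sat w0 φ) : M1.Sat w1 φ :=
  h φ hφ.1 hφ.2.1 hφ.2.2 hs

theorem refl {M : KModel} {w : M.W} : ModalArrow Pp Pm n M w M w := fun _ _ _ _ => id

theorem mono (h : ModalArrow Pp Pm n M0 w0 M1 w1) {m : ℕ} (hmn : m ≤ n) :
    ModalArrow Pp Pm m M0 w0 M1 w1 :=
  fun _ hp hm hd => h _ hp hm (hd.trans hmn)

theorem flip (h : ModalArrow Pp Pm n M0 w0 M1 w1) : ModalArrow Pm Pp n M1 w1 M0 w0 :=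
  fun φ hp hm hd hs => by_contra fun hn => h.sat (φ := φ.not) ⟨hm, hp, hd⟩ hn hs

end ModalArrow

def AtomsLE (Pp Pm : Finset ℕ) (M : KModel) (u : M.W) (N : KModel) (v : N.W) : Prop :=
  (∀ p ∈ Pp, M.val u p → N.val v p) ∧ (∀ p ∈ Pm, N.val v p → M.val u p)

theorem AtomsLE.sat {φ : ModalForm} {Pp Pm : Finset ℕ} {M N : KModel} {u : M.W} {v : N.W}
    (hφ : φ.InFragment Pp Pm 0) (h : AtomsLE Pp Pm M u N v) : M.Sat u φ → N.Sat v φ := by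
  induction φ generalizing Pp Pm M N u v with
  | var p => exact h.1 p (inFragment_var.1 hφ)
  | bot => exact id
  | and φ ψ ihφ ihψ =>
    rw [inFragment_and] at hφ
    exact fun hs => ⟨ihφ hφ.1 h hs.1, ihψ hφ.2 h hs.2⟩
  | or φ ψ ihφ ihψ =>
    rw [inFragment_or] at hφ
    exact fun hs => hs.imp (ihφ hφ.1 h) (ihψ hφ.2 h)
  | not φ ih =>
    rw [inFragment_not] at hφ
    exact fun hs hs' => hs (ih hφ ⟨h.2, h.1⟩ hs')
  | imp φ ψ ihφ ihψ =>
    rw [inFragment_imp] at hφ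
    exact fun hs hs' => ihψ hφ.2 h (hs (ihφ hφ.1 ⟨h.2, h.1⟩ hs'))
  | box φ _ => exact absurd hφ not_inFragment_box_zero

theorem AtomsLE.modalArrow_zero {Pp Pm : Finset ℕ} {M N : KModel} {u : M.W} {v : N.W}
    (h : AtomsLE Pp Pm M u N v) : ModalArrow Pp Pm 0 M u N v :=
  fun _ hp hm hd => h.sat ⟨hp, hm, hd⟩

section CharForm

variable (Pp Pm : Finset ℕ) (M : KModel) (u : M.W)

open Classical in
noncomputable def charForm : ModalForm :=
  conj ((Pp.toList.filter (M.val u ·)).map var ++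
    (Pm.toList.filter (¬ M.val u ·)).map (fun p => (var p).not))

theorem charForm_inFragment : (charForm Pp Pm M u).InFragment Pp Pm 0 := by
  refine inFragment_conj fun φ hφ => ?_
  simp only [List.mem_append, List.mem_map, List.mem_filter, Finset.mem_toList] at hφ
  rcases hφ with ⟨p, ⟨hp, -⟩, rfl⟩ | ⟨p, ⟨hp, -⟩, rfl⟩ <;> simpa

theorem sat_charForm_iff {N : KModel} {v : N.W} :
    N.Sat v (charForm Pp Pm M u) ↔ ModalArrow Pp Pm 0 M u N v := by
  simp only [charForm, KModel.sat_conj, List.mem_append, List.mem_map, List.mem_filter,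
    Finset.mem_toList]
  refine ⟨fun hs => AtomsLE.modalArrow_zero ⟨fun p hp hu => ?_, fun p hp hv => ?_⟩,
    fun h => ?_⟩
  · simpa [KModel.Sat] using hs (var p) (.inl ⟨p, ⟨hp, by simpa⟩, rfl⟩)
  · by_contra hu
    exact hs _ (.inr ⟨p, ⟨hp, by simpa⟩, rfl⟩) hv
  · rintro _ (⟨p, ⟨hPp, hp⟩, rfl⟩ | ⟨p, ⟨hPm, hp⟩, rfl⟩)
    · exact h.sat (by simpa) (by simpa [KModel.Sat] using hp)
    · exact h.sat (by simpa) (by simpa [KModel.Sat] using hp)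

theorem sat_charForm_self : M.Sat u (charForm Pp Pm M u) :=
  (sat_charForm_iff Pp Pm M u).2 ModalArrow.refl

end CharForm

theorem Matches.swap {Pp Pm : Finset ℕ} {M0 M1 : KModel} {C0 : Set M0.W} {C1 : Set M1.W}
    (h : Matches Pm Pp M1 M0 C1 C0) : Matches Pp Pm M0 M1 C0 C1 :=
  ⟨fun u0 hu0 => (h.2 u0 hu0).imp fun _ ⟨hu1, h01⟩ => ⟨hu1, h01.flip⟩,
    fun u1 hu1 => (h.1 u1 hu1).imp fun _ ⟨hu0, h10⟩ => ⟨hu0, h10.flip⟩⟩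

theorem TwoElem.exists_matching {α β : Type} {A : Set α} {B : Set β} {r : α → β → Prop}
    (hA : TwoElem A) (hB : TwoElem B) (hAB : ∀ a ∈ A, ∃ b ∈ B, r a b)
    (hBA : ∀ b ∈ B, ∃ a ∈ A, r a b) :
    ∃ (g : Fin 2 → α) (g' : Fin 2 → β), Set.range g = A ∧ Set.range g' = B ∧
      ∀ i, r (g i) (g' i) := by
  obtain ⟨a, a', -, rfl⟩ := hA
  obtain ⟨b, b', -, rfl⟩ := hB
  simp only [Set.mem_insert_iff, Set.mem_singleton_iff, forall_eq_or_imp, forall_eq,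
    exists_eq_or_imp, exists_eq_left] at hAB hBA
  rcases (by tauto : (r a b ∧ r a' b') ∨ (r a b' ∧ r a' b)) with ⟨h, h'⟩ | ⟨h, h'⟩
  · exact ⟨![a, a'], ![b, b'], Matrix.range_cons_cons_empty .., Matrix.range_cons_cons_empty ..,
      Fin.forall_fin_two.2 ⟨h, h'⟩⟩
  · refine ⟨![a, a'], ![b', b], Matrix.range_cons_cons_empty .., ?_, Fin.forall_fin_two.2 ⟨h, h'⟩⟩
    rw [Matrix.range_cons_cons_empty, Set.pair_comm]

def fanFrame (ι : Type) : KFrame where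
  W := Option (ι × Fin 2)
  R
    | none, _ => True
    | some _, none => False
    | some a, some b => a.1 = b.1
  nonempty := ⟨none⟩
  refl := by rintro (_ | _) <;> trivial
  trans := by rintro (_ | _) (_ | _) (_ | _) <;> simp_all

theorem fanFrame_toModel_mem (ι : Type) [Finite ι] [Nonempty ι] (V : (fanFrame ι).W → ℕ → Prop) :
    (fanFrame ι).toModel V ∈ C_LP221 := by
  obtain ⟨n, ⟨e⟩⟩ := Finite.exists_equiv_fin ι
  obtain ⟨j, rfl⟩ : ∃ j, n = j + 1 :=
    Nat.exists_eq_succ_of_ne_zero (Fin.pos_iff_nonempty.2 ⟨e (Classical.arbitrary ι)⟩).ne'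
  dsimp only [C_LP221, KFrame.toModel, fanFrame, Set.mem_ofPred_eq]
  refine ⟨inferInstance, none, j, fun k => {some (e.symm k, 0), some (e.symm k, 1)},
    ?_, ?_, ?_, ?_, ?_⟩
  · simp
  · exact fun k => ⟨_, _, by simp, rfl⟩
  · intro k l hkl
    simp [Set.disjoint_left, hkl]
  · rintro (_ | ⟨i, c⟩)
    · simp
    · refine .inr ⟨e i, ?_⟩
      fin_cases c <;> simp
  · rintro (_ | ⟨i, c⟩) (_ | ⟨i', c'⟩)
    iterate 3 simp
    simp only [reduceCtorEq, Option.some.injEq, Prod.mk.injEq, Set.mem_insert_iff,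
      Set.mem_singleton_iff, or_false]
    constructor
    · rintro rfl
      exact .inr ⟨e i, by fin_cases c <;> fin_cases c' <;> simp⟩
    · rintro (⟨rfl, -⟩ | ⟨k, (⟨rfl, -⟩ | ⟨rfl, -⟩), (⟨rfl, -⟩ | ⟨rfl, -⟩)⟩) <;> rfl

def fanMap {M : KModel} {ι : Type} (r : M.W) (u : ι → Fin 2 → M.W) : (fanFrame ι).W → M.W
  | none => r
  | some (k, i) => u k i

structure IsFanCover (M : KModel) {ι : Type} (r : M.W) (u : ι → Fin 2 → M.W) : Prop where
  R_root_iff : ∀ w, M.R r w ↔ w = r ∨ ∃ k i, u k i = w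
  R_cluster_iff : ∀ k i w, M.R (u k i) w ↔ ∃ i', u k i' = w

theorem IsFanCover.pMorphism {M : KModel} {ι : Type} {r : M.W} {u : ι → Fin 2 → M.W}
    (h : IsFanCover M r u) : PMorphism (fanFrame ι) M.toKFrame (fanMap r u) := by
  constructor
  · rintro (_ | ⟨k, i⟩) (_ | ⟨l, i'⟩) hR
    · exact M.refl r
    · exact (h.R_root_iff _).2 (.inr ⟨l, i', rfl⟩)
    · exact hR.elim
    · obtain rfl : k = l := hR
      exact (h.R_cluster_iff k i _).2 ⟨i', rfl⟩
  · rintro (_ | ⟨k, i⟩) w hR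
    · rcases (h.R_root_iff w).1 hR with rfl | ⟨k, i, rfl⟩
      exacts [⟨none, trivial, rfl⟩, ⟨some (k, i), trivial, rfl⟩]
    · obtain ⟨i', rfl⟩ := (h.R_cluster_iff k i w).1 hR
      exact ⟨some (k, i'), rfl, rfl⟩

structure FanData (M : KModel) where
  x : M.W
  j : ℕ
  C : Fin (j + 1) → Set M.W
  root_not_mem : ∀ k, x ∉ C k
  twoElem : ∀ k, TwoElem (C k)
  disjoint : ∀ k l, k ≠ l → Disjoint (C k) (C l)
  eq_root_or_mem : ∀ w : M.W, w = x ∨ ∃ k, w ∈ C k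
  R_iff : ∀ u v : M.W, M.R u v ↔ u = v ∨ (∃ k, u ∈ C k ∧ v ∈ C k) ∨ u = x

theorem nonempty_fanData_of_mem {M : KModel} (h : M ∈ C_LP221) : Nonempty (FanData M) :=
  let ⟨_, x, j, C, h1, h2, h3, h4, h5⟩ := h
  ⟨⟨x, j, C, h1, h2, h3, h4, h5⟩⟩

namespace FanData

variable {M : KModel} (D : FanData M)

def Sees (w : M.W) (k : Fin (D.j + 1)) : Prop := w = D.x ∨ w ∈ D.C k

theorem eq_of_mem_of_mem {a : M.W} {k l : Fin (D.j + 1)} (hk : a ∈ D.C k) (hl : a ∈ D.C l) :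
    k = l :=
  by_contra fun hkl => Set.disjoint_left.1 (D.disjoint k l hkl) hk hl

theorem R_iff_of_mem {a : M.W} {k : Fin (D.j + 1)} (ha : a ∈ D.C k) (v : M.W) :
    M.R a v ↔ v ∈ D.C k := by
  refine ⟨fun h => ?_, fun hv => (D.R_iff a v).2 (.inr (.inl ⟨k, ha, hv⟩))⟩
  rcases (D.R_iff a v).1 h with rfl | ⟨l, hal, hvl⟩ | rfl
  · exact ha
  · rwa [D.eq_of_mem_of_mem ha hal]
  · exact absurd ha (D.root_not_mem k)

variable {D} in
theorem Sees.R {w a : M.W} {k : Fin (D.j + 1)} (hw : D.Sees w k) (ha : a ∈ D.C k) : M.R w a := by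
  rcases hw with rfl | hw
  · exact (D.R_iff _ a).2 (.inr (.inr rfl))
  · exact (D.R_iff_of_mem hw a).2 ha

theorem sees_of_R {w v : M.W} {k : Fin (D.j + 1)} (h : M.R w v) (hv : v ∈ D.C k) :
    D.Sees w k := by
  rcases (D.R_iff w v).1 h with rfl | ⟨l, hwl, hvl⟩ | rfl
  · exact .inr hv
  · exact .inr (D.eq_of_mem_of_mem hvl hv ▸ hwl)
  · exact .inl rfl

theorem eq_root_of_R_root {w : M.W} (h : M.R w D.x) : w = D.x := by
  rcases (D.R_iff w D.x).1 h with rfl | ⟨k, -, hx⟩ | rfl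
  exacts [rfl, absurd hx (D.root_not_mem k), rfl]

variable {D} in
theorem Sees.of_R {w v : M.W} {k : Fin (D.j + 1)} (h : M.R w v) (hv : D.Sees v k) :
    D.Sees w k := by
  rcases hv with rfl | hv
  exacts [.inl (D.eq_root_of_R_root h), D.sees_of_R h hv]

theorem exists_sees (w : M.W) : ∃ k, D.Sees w k := by
  rcases D.eq_root_or_mem w with rfl | ⟨k, hk⟩
  exacts [⟨0, .inl rfl⟩, ⟨k, .inr hk⟩]

theorem isFanCover {ι : Type} {w : M.W} {σ : ι → Fin (D.j + 1)} {u : ι → Fin 2 → M.W}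
    (hσ : ∀ p, D.Sees w (σ p)) (hσ_surj : ∀ k, D.Sees w k → ∃ p, σ p = k)
    (hu : ∀ p, Set.range (u p) = D.C (σ p)) : IsFanCover M w u := by
  have hmem (p i) : u p i ∈ D.C (σ p) := hu p ▸ Set.mem_range_self i
  refine ⟨fun v => ⟨fun hv => ?_, ?_⟩, fun p i v => ?_⟩
  · rcases D.eq_root_or_mem v with rfl | ⟨k, hk⟩
    · exact .inl (D.eq_root_of_R_root hv).symm
    · obtain ⟨p, rfl⟩ := hσ_surj k (D.sees_of_R hv hk)
      exact .inr ⟨p, (hu p ▸ hk : v ∈ Set.range (u p))⟩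
  · rintro (rfl | ⟨p, i, rfl⟩)
    exacts [M.refl v, (hσ p).R (hmem p i)]
  · rw [D.R_iff_of_mem (hmem p i), ← hu p, Set.mem_range]

end FanData

theorem FanData.exists_matches {Pp Pm : Finset ℕ} {M0 M1 : KModel} (D0 : FanData M0)
    (D1 : FanData M1) {w0 : M0.W} {w1 : M1.W} (h : ModalArrow Pp Pm 3 M0 w0 M1 w1)
    {k : Fin (D0.j + 1)} (hk : D0.Sees w0 k) :
    ∃ l, D1.Sees w1 l ∧ Matches Pp Pm M0 M1 (D0.C k) (D1.C l) := by
  obtain ⟨a, a', -, hA⟩ := D0.twoElem k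
  set δ := charForm Pp Pm M0 a
  set δ' := charForm Pp Pm M0 a'
  set ψ := (δ.or δ').and (δ.dia.and δ'.dia)
  have hψ : ψ.InFragment Pp Pm 1 := by
    have hδ := charForm_inFragment Pp Pm M0 a
    have hδ' := charForm_inFragment Pp Pm M0 a'
    simp only [ψ, inFragment_and, inFragment_or, inFragment_dia]
    exact ⟨⟨hδ.mono zero_le_one, hδ'.mono zero_le_one⟩, hδ, hδ'⟩
  have ha : a ∈ D0.C k := hA ▸ Set.mem_insert a _
  have ha' : a' ∈ D0.C k := hA ▸ Set.mem_insert_of_mem a rfl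
  have hsat0 : M0.Sat w0 ψ.box.dia := by
    refine (KModel.sat_dia _ _ _).2 ⟨a, hk.R ha, fun β hβ => ?_⟩
    replace hβ := (D0.R_iff_of_mem ha β).1 hβ
    refine ⟨?_, (KModel.sat_dia _ _ _).2 ⟨a, (D0.R_iff_of_mem hβ a).2 ha, sat_charForm_self ..⟩,
      (KModel.sat_dia _ _ _).2 ⟨a', (D0.R_iff_of_mem hβ a').2 ha', sat_charForm_self ..⟩⟩
    rw [hA] at hβ
    rcases hβ with rfl | rfl
    exacts [.inl (sat_charForm_self ..), .inr (sat_charForm_self ..)]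
  obtain ⟨v, hv, hvψ⟩ := (KModel.sat_dia _ _ _).1 (h.sat (by simpa) hsat0)
  obtain ⟨l, hl⟩ := D1.exists_sees v
  refine ⟨l, hl.of_R hv, fun u hu => ?_, fun u hu => ?_⟩
  · obtain ⟨b, b', -, hB⟩ := D1.twoElem l
    have hb : b ∈ D1.C l := hB ▸ Set.mem_insert b _
    obtain ⟨-, hbδ, hbδ'⟩ := hvψ b (hl.R hb)
    rw [hA] at hu
    rcases hu with rfl | rfl
    · obtain ⟨γ, hγ, hγδ⟩ := (KModel.sat_dia _ _ _).1 hbδ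
      exact ⟨γ, (D1.R_iff_of_mem hb γ).1 hγ, (sat_charForm_iff ..).1 hγδ⟩
    · obtain ⟨γ, hγ, hγδ⟩ := (KModel.sat_dia _ _ _).1 hbδ'
      exact ⟨γ, (D1.R_iff_of_mem hb γ).1 hγ, (sat_charForm_iff ..).1 hγδ⟩
  · rcases (hvψ u (hl.R hu)).1 with hu' | hu'
    exacts [⟨a, ha, (sat_charForm_iff ..).1 hu'⟩, ⟨a', ha', (sat_charForm_iff ..).1 hu'⟩]

theorem exists_fan_interpolant {Pp Pm : Finset ℕ} {M0 M1 : KModel} (D0 : FanData M0)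
    (D1 : FanData M1) {w0 : M0.W} {w1 : M1.W} (h : ModalArrow Pp Pm 0 M0 w0 M1 w1)
    (hup : ∀ k, D0.Sees w0 k → ∃ l, D1.Sees w1 l ∧ Matches Pp Pm M0 M1 (D0.C k) (D1.C l))
    (hdown : ∀ l, D1.Sees w1 l → ∃ k, D0.Sees w0 k ∧ Matches Pp Pm M0 M1 (D0.C k) (D1.C l)) :
    ∃ (F : KFrame) (wstar : F.W) (f0 : F.W → M0.W) (f1 : F.W → M1.W),
      (∀ V : F.W → ℕ → Prop, F.toModel V ∈ C_LP221) ∧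
      PMorphism F M0.toKFrame f0 ∧ PMorphism F M1.toKFrame f1 ∧
      f0 wstar = w0 ∧ f1 wstar = w1 ∧ ∀ x : F.W, ModalArrow Pp Pm 0 M0 (f0 x) M1 (f1 x) := by
  let ι := {p : Fin (D0.j + 1) × Fin (D1.j + 1) //
    D0.Sees w0 p.1 ∧ D1.Sees w1 p.2 ∧ Matches Pp Pm M0 M1 (D0.C p.1) (D1.C p.2)}
  have : Nonempty ι :=
    let ⟨k, hk⟩ := D0.exists_sees w0
    let ⟨l, hl, hkl⟩ := hup k hk
    ⟨⟨(k, l), hk, hl, hkl⟩⟩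
  choose u0 u1 hu0 hu1 hu using fun p : ι =>
    (D0.twoElem p.1.1).exists_matching (D1.twoElem p.1.2) p.2.2.2.1 p.2.2.2.2
  refine ⟨fanFrame ι, none, fanMap w0 u0, fanMap w1 u1, fanFrame_toModel_mem ι, ?_, ?_, rfl, rfl,
    ?_⟩
  · refine (D0.isFanCover (fun p => p.2.1) (fun k hk => ?_) hu0).pMorphism
    obtain ⟨l, hl, hkl⟩ := hup k hk
    exact ⟨⟨(k, l), hk, hl, hkl⟩, rfl⟩
  · refine (D1.isFanCover (fun p => p.2.2.1) (fun l hl => ?_) hu1).pMorphism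
    obtain ⟨k, hk, hkl⟩ := hdown l hl
    exact ⟨⟨(k, l), hk, hl, hkl⟩, rfl⟩
  · rintro (_ | ⟨p, i⟩)
    exacts [h, hu p i]

theorem stmt16 : EnjoysIP C_LP221 3 := by
  intro Pp Pm M0 M1 hM0 hM1 w0 w1 h
  obtain ⟨D0⟩ := nonempty_fanData_of_mem hM0
  obtain ⟨D1⟩ := nonempty_fanData_of_mem hM1
  refine exists_fan_interpolant D0 D1 (h.mono (Nat.zero_le 3))
    (fun k hk => D0.exists_matches D1 h hk) (fun l hl => ?_)
  obtain ⟨k, hk, hlk⟩ := D1.exists_matches D0 h.flip hl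
  exact ⟨k, hk, hlk.swap⟩
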